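/- Let n ≥ 1, let A be an IFM of order n, let λ ∈ (0,1) and let p > 0 be a real number. If for some index j there is a critical path from a critical vertex to j, then (A^m)μ s j → 1 and (A^m)ν s j → 0 as m → ∞ for every index s (powers taken with the maxgeneralized mean–mingeneralized mean operation). -/

import Mathlib

open Filter Topology

/-- `A` (given by membership part `Amu` and non-membership part `Anu`) is an
intuitionistic fuzzy matrix. -/
def IsIFM (n : ℕ) (Amu Anu : Fin n → Fin n → ℝ) : Prop :=
  ∀ i j, 0 ≤ Amu i j ∧ 0 ≤ Anu i j ∧ Amu i j + Anu i j ≤ 1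

/-- Powers of an IFM under the maxgeneralized mean–mingeneralized mean operation
with parameters `lam` and exponent `p`:
`A^1 = A` and `A^(k+1) = A^k ∘ A`, where
`(X ∘ A)μ i j = max_t (lam·(Xμ i t)^p + (1-lam)·(Aμ t j)^p)^(1/p)` and
`(X ∘ A)ν i j = min_t (lam·(Xν i t)^p + (1-lam)·(Aν t j)^p)^(1/p)`.
(The value at `0` is irrelevant; it is set to `A`.) -/
noncomputable def gmPow (n : ℕ) (lam p : ℝ) (Amu Anu : Fin n → Fin n → ℝ) :
    ℕ → (Fin n → Fin n → ℝ) × (Fin n → Fin n → ℝ)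
  | 0 => (Amu, Anu)
  | 1 => (Amu, Anu)
  | m + 2 =>
    let X := gmPow n lam p Amu Anu (m + 1)
    (fun i j => ⨆ t : Fin n, (lam * X.1 i t ^ p + (1 - lam) * Amu t j ^ p) ^ (1 / p),
     fun i j => ⨅ t : Fin n, (lam * X.2 i t ^ p + (1 - lam) * Anu t j ^ p) ^ (1 / p))

/-- The edge `(i,j)` is critical: `Aμ i j = 1` and `Aν i j = 0`. -/
def CritEdge (n : ℕ) (Amu Anu : Fin n → Fin n → ℝ) (i j : Fin n) : Prop :=
  Amu i j = 1 ∧ Anu i j = 0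

/-- `v` is a critical vertex: it lies on some critical circuit. -/
def CritVertex (n : ℕ) (Amu Anu : Fin n → Fin n → ℝ) (v : Fin n) : Prop :=
  ∃ h : ℕ, 1 ≤ h ∧ ∃ Q : Fin (h + 1) → Fin n,
    Q 0 = Q (Fin.last h) ∧
    (∀ k : Fin h, CritEdge n Amu Anu (Q k.castSucc) (Q k.succ)) ∧ ∃ k, Q k = v

/-- There is a critical path (of some length `m ≥ 1`) from a critical vertex to `j`. -/
def CritPathTo (n : ℕ) (Amu Anu : Fin n → Fin n → ℝ) (j : Fin n) : Prop :=
  ∃ m : ℕ, 1 ≤ m ∧ ∃ P : Fin (m + 1) → Fin n,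
    CritVertex n Amu Anu (P 0) ∧ P (Fin.last m) = j ∧
    ∀ k : Fin m, CritEdge n Amu Anu (P k.castSucc) (P k.succ)

/-! Along a critical edge `(t, j)` one step of the power recursion gives
`1 - (A^(m+1))μ s j ^ p ≤ lam · (1 - (A^m)μ s t ^ p)` and `(A^(m+1))ν s j ^ p ≤ lam · (A^m)ν s t ^ p`.
Going round the critical circuit and then along the critical path, `j` is the endpoint of critical
walks of every length `k`; iterating along one squeezes the `p`-th powers of the entries of
`A^(k+1)` in column `j` to within `lam ^ k` of `1` and `0` respectively. -/

inductive CritWalkTo (n : ℕ) (Amu Anu : Fin n → Fin n → ℝ) : ℕ → Fin n → Prop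
  | nil (j : Fin n) : CritWalkTo n Amu Anu 0 j
  | snoc {k : ℕ} {t j : Fin n} :
      CritWalkTo n Amu Anu k t → CritEdge n Amu Anu t j → CritWalkTo n Amu Anu (k + 1) j

section

variable {n : ℕ} {Amu Anu : Fin n → Fin n → ℝ}

theorem CritEdge.critWalkTo_forall {t j : Fin n} (he : CritEdge n Amu Anu t j)
    (ht : ∀ k, CritWalkTo n Amu Anu k t) : ∀ k, CritWalkTo n Amu Anu k j
  | 0 => .nil j
  | k + 1 => (ht k).snoc he

theorem CritVertex.critWalkTo {v : Fin n} (hv : CritVertex n Amu Anu v) :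
    ∀ k, CritWalkTo n Amu Anu k v := by
  obtain ⟨_ | h, hh, Q, hQ0, hQe, i, rfl⟩ := hv
  · omega
  suffices ∀ k i, CritWalkTo n Amu Anu k (Q i) from fun k => this k i
  intro k
  induction k with
  | zero => exact fun i => .nil _
  | succ k ih =>
    -- the circuit is closed: `Q 0 = Q (h + 1)` is entered from `Q h`
    refine Fin.cases ?_ fun i => (ih i.castSucc).snoc (hQe i)
    rw [hQ0, ← Fin.succ_last]
    exact (ih (Fin.last h).castSucc).snoc (hQe _)

theorem CritPathTo.critWalkTo {j : Fin n} (hj : CritPathTo n Amu Anu j) :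
    ∀ k, CritWalkTo n Amu Anu k j := by
  obtain ⟨m, -, P, hP0, rfl, hPe⟩ := hj
  induction Fin.last m using Fin.induction with
  | zero => exact hP0.critWalkTo
  | succ i ih => exact (hPe i).critWalkTo_forall ih

end

section

variable {n : ℕ} {Amu Anu : Fin n → Fin n → ℝ} {lam p : ℝ}

theorem gmPow_add_two_fst (m : ℕ) (i j : Fin n) :
    (gmPow n lam p Amu Anu (m + 2)).1 i j =
      ⨆ t, (lam * (gmPow n lam p Amu Anu (m + 1)).1 i t ^ p + (1 - lam) * Amu t j ^ p) ^ (1 / p) :=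
  rfl

theorem gmPow_add_two_snd (m : ℕ) (i j : Fin n) :
    (gmPow n lam p Amu Anu (m + 2)).2 i j =
      ⨅ t, (lam * (gmPow n lam p Amu Anu (m + 1)).2 i t ^ p + (1 - lam) * Anu t j ^ p) ^ (1 / p) :=
  rfl

theorem genMean_mem_Icc {x y : ℝ} (hlam : lam ∈ Set.Icc (0 : ℝ) 1) (hp : 0 < p)
    (hx : x ∈ Set.Icc (0 : ℝ) 1) (hy : y ∈ Set.Icc (0 : ℝ) 1) :
    (lam * x ^ p + (1 - lam) * y ^ p) ^ (1 / p) ∈ Set.Icc (0 : ℝ) 1 := by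
  obtain ⟨hlam0, hlam1⟩ := hlam
  have hxp : x ^ p ∈ Set.Icc (0 : ℝ) 1 := ⟨by positivity [hx.1], Real.rpow_le_one hx.1 hx.2 hp.le⟩
  have hyp : y ^ p ∈ Set.Icc (0 : ℝ) 1 := ⟨by positivity [hy.1], Real.rpow_le_one hy.1 hy.2 hp.le⟩
  have h0 : 0 ≤ lam * x ^ p + (1 - lam) * y ^ p := by nlinarith [hxp.1, hyp.1]
  exact ⟨by positivity, Real.rpow_le_one h0 (by nlinarith [hxp.2, hyp.2]) (by positivity)⟩

theorem ciSup_mem_Icc {ι : Type*} [Finite ι] [Nonempty ι] {f : ι → ℝ} {a b : ℝ}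
    (hf : ∀ i, f i ∈ Set.Icc a b) : ⨆ i, f i ∈ Set.Icc a b := by
  obtain ⟨i, hi⟩ := exists_eq_ciSup_of_finite (f := f)
  exact hi ▸ hf i

theorem ciInf_mem_Icc {ι : Type*} [Finite ι] [Nonempty ι] {f : ι → ℝ} {a b : ℝ}
    (hf : ∀ i, f i ∈ Set.Icc a b) : ⨅ i, f i ∈ Set.Icc a b := by
  obtain ⟨i, hi⟩ := exists_eq_ciInf_of_finite (f := f)
  exact hi ▸ hf i

theorem gmPow_mem_Icc (hA : IsIFM n Amu Anu) (hlam : lam ∈ Set.Icc (0 : ℝ) 1) (hp : 0 < p)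
    (m : ℕ) (i j : Fin n) :
    (gmPow n lam p Amu Anu m).1 i j ∈ Set.Icc (0 : ℝ) 1 ∧
      (gmPow n lam p Amu Anu m).2 i j ∈ Set.Icc (0 : ℝ) 1 := by
  have : Nonempty (Fin n) := ⟨i⟩
  have hA' : ∀ t j, Amu t j ∈ Set.Icc (0 : ℝ) 1 ∧ Anu t j ∈ Set.Icc (0 : ℝ) 1 := fun t j => by
    obtain ⟨h1, h2, h3⟩ := hA t j
    exact ⟨⟨h1, by linarith⟩, h2, by linarith⟩
  induction m using Nat.strong_induction_on generalizing j with
  | _ m ih =>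
    match m, ih with
    | 0, _ | 1, _ => exact hA' i j
    | m + 2, ih =>
      rw [gmPow_add_two_fst, gmPow_add_two_snd]
      exact ⟨ciSup_mem_Icc fun t => genMean_mem_Icc hlam hp (ih (m + 1) (by omega) t).1 (hA' t j).1,
        ciInf_mem_Icc fun t => genMean_mem_Icc hlam hp (ih (m + 1) (by omega) t).2 (hA' t j).2⟩

end

section

variable {n : ℕ} {Amu Anu : Fin n → Fin n → ℝ} {lam p : ℝ}
  (hA : IsIFM n Amu Anu) (hlam : lam ∈ Set.Icc (0 : ℝ) 1) (hp : 0 < p)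
include hA hlam hp

theorem CritEdge.le_rpow_gmPow_add_two_fst {t j : Fin n} (he : CritEdge n Amu Anu t j)
    (m : ℕ) (s : Fin n) :
    lam * (gmPow n lam p Amu Anu (m + 1)).1 s t ^ p + (1 - lam) ≤
      (gmPow n lam p Amu Anu (m + 2)).1 s j ^ p := by
  have hx := (gmPow_mem_Icc hA hlam hp (m + 1) s t).1
  have h0 : 0 ≤ lam * (gmPow n lam p Amu Anu (m + 1)).1 s t ^ p + (1 - lam) := by
    nlinarith [hlam.1, hlam.2, Real.rpow_nonneg hx.1 p]
  rw [← Real.rpow_inv_le_iff_of_pos h0 (gmPow_mem_Icc hA hlam hp (m + 2) s j).1.1 hp,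
    gmPow_add_two_fst, ← one_div]
  refine le_of_eq_of_le ?_ (le_ciSup (Set.finite_range _).bddAbove t)
  rw [he.1, Real.one_rpow, mul_one]

theorem CritEdge.rpow_gmPow_add_two_snd_le {t j : Fin n} (he : CritEdge n Amu Anu t j)
    (m : ℕ) (s : Fin n) :
    (gmPow n lam p Amu Anu (m + 2)).2 s j ^ p ≤
      lam * (gmPow n lam p Amu Anu (m + 1)).2 s t ^ p := by
  have hy := (gmPow_mem_Icc hA hlam hp (m + 1) s t).2
  rw [← Real.le_rpow_inv_iff_of_pos (gmPow_mem_Icc hA hlam hp (m + 2) s j).2.1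
    (mul_nonneg hlam.1 (Real.rpow_nonneg hy.1 p)) hp, gmPow_add_two_snd, ← one_div]
  refine le_of_le_of_eq (ciInf_le (Set.finite_range _).bddBelow t) ?_
  rw [he.2, Real.zero_rpow hp.ne', mul_zero, add_zero]

theorem CritWalkTo.one_sub_pow_le_rpow_gmPow_fst {k : ℕ} {j : Fin n}
    (hw : CritWalkTo n Amu Anu k j) (s : Fin n) :
    1 - lam ^ k ≤ (gmPow n lam p Amu Anu (k + 1)).1 s j ^ p := by
  induction hw with
  | nil j =>
    rw [pow_zero, sub_self]
    exact Real.rpow_nonneg (gmPow_mem_Icc hA hlam hp 1 s j).1.1 p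
  | @snoc k t j _ he ih =>
    calc 1 - lam ^ (k + 1) = lam * (1 - lam ^ k) + (1 - lam) := by ring
      _ ≤ lam * (gmPow n lam p Amu Anu (k + 1)).1 s t ^ p + (1 - lam) := by
        gcongr
        exact hlam.1
      _ ≤ _ := he.le_rpow_gmPow_add_two_fst hA hlam hp k s

theorem CritWalkTo.rpow_gmPow_snd_le_pow {k : ℕ} {j : Fin n}
    (hw : CritWalkTo n Amu Anu k j) (s : Fin n) :
    (gmPow n lam p Amu Anu (k + 1)).2 s j ^ p ≤ lam ^ k := by
  induction hw with
  | nil j =>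
    have hy := (gmPow_mem_Icc hA hlam hp 1 s j).2
    rw [pow_zero]
    exact Real.rpow_le_one hy.1 hy.2 hp.le
  | @snoc k t j _ he ih =>
    calc _ ≤ lam * (gmPow n lam p Amu Anu (k + 1)).2 s t ^ p :=
          he.rpow_gmPow_add_two_snd_le hA hlam hp k s
      _ ≤ lam * lam ^ k := by
        gcongr
        exact hlam.1
      _ = lam ^ (k + 1) := by ring

end

theorem Filter.Tendsto.of_rpow {α : Type*} {l : Filter α} {f : α → ℝ} {a p : ℝ}
    (hf : ∀ x, 0 ≤ f x) (hp : 0 < p) (h : Tendsto (fun x => f x ^ p) l (𝓝 a)) :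
    Tendsto f l (𝓝 (a ^ p⁻¹)) :=
  (h.rpow_const (Or.inr (inv_nonneg.2 hp.le))).congr fun x => Real.rpow_rpow_inv (hf x) hp.ne'

theorem critPath_implies_gmPow_column_one (n : ℕ)
    (Amu Anu : Fin n → Fin n → ℝ) (hA : IsIFM n Amu Anu)
    (lam p : ℝ) (hlam : lam ∈ Set.Ioo (0 : ℝ) 1) (hp : 0 < p) (j : Fin n)
    (hcrit : CritPathTo n Amu Anu j) :
    ∀ s : Fin n,
      Tendsto (fun m => (gmPow n lam p Amu Anu m).1 s j) atTop (𝓝 1) ∧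
      Tendsto (fun m => (gmPow n lam p Amu Anu m).2 s j) atTop (𝓝 0) := by
  intro s
  have hlam' := Set.Ioo_subset_Icc_self hlam
  have hmem := gmPow_mem_Icc hA hlam' hp
  have hgeom : Tendsto (fun k : ℕ => lam ^ k) atTop (𝓝 0) :=
    tendsto_pow_atTop_nhds_zero_of_lt_one hlam.1.le hlam.2
  have hμ : Tendsto (fun k => (gmPow n lam p Amu Anu (k + 1)).1 s j ^ p) atTop (𝓝 1) := by
    refine tendsto_of_tendsto_of_tendsto_of_le_of_le (by simpa using hgeom.const_sub 1)
      tendsto_const_nhds (fun k => (hcrit.critWalkTo k).one_sub_pow_le_rpow_gmPow_fst hA hlam' hp s)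
      fun k => Real.rpow_le_one (hmem _ s j).1.1 (hmem _ s j).1.2 hp.le
  have hν : Tendsto (fun k => (gmPow n lam p Amu Anu (k + 1)).2 s j ^ p) atTop (𝓝 0) :=
    tendsto_of_tendsto_of_tendsto_of_le_of_le tendsto_const_nhds hgeom
      (fun k => Real.rpow_nonneg (hmem _ s j).2.1 p)
      fun k => (hcrit.critWalkTo k).rpow_gmPow_snd_le_pow hA hlam' hp s
  refine ⟨(tendsto_add_atTop_iff_nat 1).1 ?_, (tendsto_add_atTop_iff_nat 1).1 ?_⟩
  · simpa only [Real.one_rpow] using hμ.of_rpow (fun k => (hmem _ s j).1.1) hp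
  · simpa only [Real.zero_rpow (inv_ne_zero hp.ne')] using hν.of_rpow (fun k => (hmem _ s j).2.1) hp
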